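/- Lemma 1 (feasibility of downward adjustment): Let p_min(i), p_max(i) be generator limits for i = 1,…,N with 0 ≤ p_min(i) < p_max(i), and let C ∈ ℝ denote the risk-based required power. Suppose (a) max_i p_min(i) < min_i (p_max(i) - p_min(i)), and (b) 0 < C - Σ_{i=1}^{k-1} p_max(i) < p_min(k) for some 2 ≤ k ≤ N. Then p_min(k-1) < C - Σ_{i=1}^{k-2} p_max(i) - p_min(k) < p_max(k-1). -/

import Mathlib

open Finset

theorem Finset.sum_Icc_one_sub_one_eq {M : Type*} [AddCommMonoid M] (f : ℕ → M) {k : ℕ}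
    (hk : 2 ≤ k) : ∑ i ∈ Icc 1 (k - 1), f i = ∑ i ∈ Icc 1 (k - 2), f i + f (k - 1) := by
  obtain ⟨m, rfl⟩ := Nat.exists_eq_add_of_le hk
  simpa [Nat.add_sub_cancel_left, add_comm, add_left_comm] using
    sum_Icc_succ_top (a := 1) (b := m) (by omega) f

theorem sub_sub_mem_Ioo_of_residual_mem_Ioo {S C amin amax bmin : ℝ}
    (hgap : bmin < amax - amin) (hres : C - (S + amax) ∈ Set.Ioo 0 bmin) :
    C - S - bmin ∈ Set.Ioo amin amax :=
  ⟨by linarith [hres.1], by linarith [hres.2]⟩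

theorem stmt_8_general (N k : ℕ) (pmin pmax : ℕ → ℝ) (C : ℝ)
    (hk2 : 2 ≤ k) (hkN : k ≤ N)
    (ha : ∀ i ∈ Finset.Icc 1 N, ∀ j ∈ Finset.Icc 1 N, pmin i < pmax j - pmin j)
    (hb1 : 0 < C - ∑ i ∈ Finset.Icc 1 (k - 1), pmax i)
    (hb2 : C - ∑ i ∈ Finset.Icc 1 (k - 1), pmax i < pmin k) :
    pmin (k - 1) < C - (∑ i ∈ Finset.Icc 1 (k - 2), pmax i) - pmin k ∧
      C - (∑ i ∈ Finset.Icc 1 (k - 2), pmax i) - pmin k < pmax (k - 1) := by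
  rw [sum_Icc_one_sub_one_eq pmax hk2] at hb1 hb2
  have hgap : pmin k < pmax (k - 1) - pmin (k - 1) :=
    ha k (mem_Icc.2 ⟨by omega, hkN⟩) (k - 1) (mem_Icc.2 ⟨by omega, by omega⟩)
  exact sub_sub_mem_Ioo_of_residual_mem_Ioo hgap ⟨hb1, hb2⟩

/-- Lemma 1 (feasibility of downward adjustment): generator `k-1` can reduce its
output so that generator `k` runs at its minimum, staying within its own limits. -/
theorem stmt_8 (N k : ℕ) (pmin pmax : ℕ → ℝ) (C : ℝ)
    (hk2 : 2 ≤ k) (hkN : k ≤ N)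
    (hbounds : ∀ i ∈ Finset.Icc 1 N, 0 ≤ pmin i ∧ pmin i < pmax i)
    (ha : ∀ i ∈ Finset.Icc 1 N, ∀ j ∈ Finset.Icc 1 N, pmin i < pmax j - pmin j)
    (hb1 : 0 < C - ∑ i ∈ Finset.Icc 1 (k - 1), pmax i)
    (hb2 : C - ∑ i ∈ Finset.Icc 1 (k - 1), pmax i < pmin k) :
    pmin (k - 1) < C - (∑ i ∈ Finset.Icc 1 (k - 2), pmax i) - pmin k ∧
      C - (∑ i ∈ Finset.Icc 1 (k - 2), pmax i) - pmin k < pmax (k - 1) :=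
  stmt_8_general N k pmin pmax C hk2 hkN ha hb1 hb2
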